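/- There exists a constant c ∈ (0,1], depending only on κ, such that the following holds (large cut-off regime, inner inclusion of Lemma 2.4 (2)). Let d ≥ 1, κ > 1, U > 0, t > 0, x_min ≥ (Ut)^{κ/(κ-1)} and x ∈ ℝ^d. Then for every z ∈ ℝ^d with ‖z − x‖ ≤ c·Ut·max(x_min, ‖x‖)^{1/κ}, there exists a differentiable curve y : [0,t] → ℝ^d with y(0) = x, y(t) = z, and ‖y'(s)‖ ≤ U·(x_min + ‖y(s)‖)^{1/κ} for all s ∈ [0,t]. -/

import Mathlib

/-!
Take `c = 1/2` and the straight segment from `x` to `z`, run at constant speed. Write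
`M = max x_min ‖x‖`. A large cut-off gives `Ut ≤ M^{1 - 1/κ}`, so `‖z - x‖ ≤ M/2` and the segment
keeps `x_min + ‖y(s)‖ ≥ M/2`. Its speed `‖z - x‖/t ≤ (U/2) M^{1/κ}` is then at most
`U (M/2)^{1/κ}`, because `1/κ ≤ 1`.
-/

open Set

lemma mul_rpow_one_div_le_of_rpow_le {κ a M : ℝ} (hκ : 1 < κ) (ha : 0 ≤ a)
    (h : a ^ (κ / (κ - 1)) ≤ M) : a * M ^ (1 / κ) ≤ M := by
  have hκ₀ : κ ≠ 0 := by positivity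
  have hκ₁ : κ - 1 ≠ 0 := sub_ne_zero.mpr hκ.ne'
  have hsum : (κ - 1) / κ + 1 / κ = 1 := by field_simp; ring
  have hM : 0 ≤ M := (Real.rpow_nonneg ha _).trans h
  have ha_le : a ≤ M ^ ((κ - 1) / κ) := by
    calc a = (a ^ (κ / (κ - 1))) ^ ((κ - 1) / κ) := by
          rw [← Real.rpow_mul ha, div_mul_div_cancel₀ hκ₁, div_self hκ₀, Real.rpow_one]
      _ ≤ M ^ ((κ - 1) / κ) :=
          Real.rpow_le_rpow (Real.rpow_nonneg ha _) h (div_nonneg (by linarith) (by linarith))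
  calc a * M ^ (1 / κ) ≤ M ^ ((κ - 1) / κ) * M ^ (1 / κ) := by gcongr
    _ = M := by rw [← Real.rpow_add' hM (hsum.symm ▸ one_ne_zero), hsum, Real.rpow_one]

lemma mul_rpow_le_rpow_mul {l M r : ℝ} (hl₀ : 0 ≤ l) (hl₁ : l ≤ 1) (hM : 0 ≤ M) (hr : r ≤ 1) :
    l * M ^ r ≤ (l * M) ^ r := by
  rw [Real.mul_rpow hl₀ hM]
  gcongr
  exact Real.self_le_rpow_of_le_one hl₀ hl₁ hr

lemma max_div_two_le_add_norm {E : Type*} [SeminormedAddCommGroup E] {a : ℝ} {x y : E}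
    (ha : 0 ≤ a) (hy : dist y x ≤ max a ‖x‖ / 2) : max a ‖x‖ / 2 ≤ a + ‖y‖ := by
  have hx : ‖x‖ - dist y x ≤ ‖y‖ := by
    rw [dist_eq_norm]
    linarith [norm_sub_norm_le x y, norm_sub_rev x y]
  have hmax : max a ‖x‖ ≤ a + ‖x‖ := max_le (by linarith [norm_nonneg x]) (by linarith)
  linarith

lemma exists_hasDerivAt_segment {E : Type*} [NormedAddCommGroup E] [NormedSpace ℝ E]
    {t : ℝ} (ht : 0 < t) (x z : E) :
    ∃ y y' : ℝ → E, y 0 = x ∧ y t = z ∧ ∀ s ∈ Icc 0 t,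
      HasDerivAt y (y' s) s ∧ ‖y' s‖ = dist z x / t ∧ dist (y s) x ≤ dist z x := by
  refine ⟨fun s ↦ AffineMap.lineMap x z (s / t), fun _ ↦ (1 / t) • (z - x), by simp,
    by simp [ht.ne'], fun s hs ↦ ⟨?_, ?_, ?_⟩⟩
  · exact AffineMap.hasDerivAt_lineMap.scomp s ((hasDerivAt_id s).div_const t)
  · rw [norm_smul, dist_eq_norm, Real.norm_of_nonneg (by positivity)]
    ring
  · have hst : ‖s / t‖ ≤ 1 := by
      rw [Real.norm_of_nonneg (div_nonneg hs.1 ht.le)]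
      exact div_le_one_of_le₀ hs.2 ht.le
    rw [dist_lineMap_left, dist_comm x z]
    exact mul_le_of_le_one_left dist_nonneg hst

/-- Lemma 2.4 (2), large cut-off regime, inner inclusion: there is a constant
`c ∈ (0,1]` depending only on `κ` such that, for a large cut-off
`x_min ≥ (Ut)^{κ/(κ-1)}`, every point `z` with `‖z - x‖ ≤ c·Ut·max(x_min,‖x‖)^{1/κ}`
is reached at time `t` by a curve started at `x` whose speed is bounded by
`U (x_min + ‖·‖)^{1/κ}`. -/
theorem large_cutoff_inner_inclusion (κ : ℝ) (hκ : 1 < κ) :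
    ∃ c : ℝ, 0 < c ∧ c ≤ 1 ∧
      ∀ (d : ℕ), 1 ≤ d →
        ∀ U t xmin : ℝ, 0 < U → 0 < t →
          (U * t) ^ (κ / (κ - 1)) ≤ xmin →
          ∀ x z : EuclideanSpace ℝ (Fin d),
            ‖z - x‖ ≤ c * (U * t) * (max xmin ‖x‖) ^ (1 / κ) →
            ∃ y y' : ℝ → EuclideanSpace ℝ (Fin d),
              y 0 = x ∧ y t = z ∧
              ∀ s ∈ Set.Icc (0 : ℝ) t,
                HasDerivAt y (y' s) s ∧ ‖y' s‖ ≤ U * (xmin + ‖y s‖) ^ (1 / κ) := by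
  refine ⟨1 / 2, by norm_num, by norm_num, fun d _ U t xmin hU ht hcut x z hz ↦ ?_⟩
  set M := max xmin ‖x‖
  have hxmin : 0 ≤ xmin := (Real.rpow_nonneg (by positivity) _).trans hcut
  have hM : 0 ≤ M := hxmin.trans (le_max_left _ _)
  have hzx : dist z x ≤ M / 2 := by
    have := mul_rpow_one_div_le_of_rpow_le hκ (by positivity) (hcut.trans (le_max_left _ ‖x‖))
    rw [dist_eq_norm]
    linarith
  obtain ⟨y, y', hy₀, hyt, hy⟩ := exists_hasDerivAt_segment ht x z
  refine ⟨y, y', hy₀, hyt, fun s hs ↦ ⟨(hy s hs).1, ?_⟩⟩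
  have hys : M / 2 ≤ xmin + ‖y s‖ := max_div_two_le_add_norm hxmin ((hy s hs).2.2.trans hzx)
  calc ‖y' s‖ = dist z x / t := (hy s hs).2.1
    _ ≤ U * (1 / 2 * M ^ (1 / κ)) := by
      rw [div_le_iff₀ ht, dist_eq_norm]
      linarith
    _ ≤ U * (1 / 2 * M) ^ (1 / κ) := by
      gcongr
      exact mul_rpow_le_rpow_mul (by norm_num) (by norm_num) hM
        ((div_le_one (by linarith)).mpr hκ.le)
    _ ≤ U * (xmin + ‖y s‖) ^ (1 / κ) := by
      gcongr
      linarith
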